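/- View S¹ as ℝ/ℤ and let f : S¹ → Set S¹ be the at-most-3-valued map with f(x) = {0, 1/2} for x ∉ [1/3, 2/3] and f(x) = {0, 1/2, (3/2)(x − 1/3)} for x ∈ [1/3, 2/3] (all values taken mod 1). Then there is no function w : S¹ × S¹ → ℕ making f into an ℕ-weighted map; that is, there is no w with w(x,y) > 0 exactly when y ∈ f(x) and satisfying the local weight-sum condition: for every open U ⊆ S¹ and x with f(x) ∩ ∂U = ∅ there is a neighborhood V of x with Σ_{y∈U} w(x,y) = Σ_{y∈U} w(z,y) for all z ∈ V. Hence the class of at-most-n-valued maps realized by ℕ-weighted maps is strictly smaller than the class of all at-most-n-valued maps. -/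

import Mathlib

open Set Topology

/-- The "fork" map on the circle `S¹ = ℝ/ℤ`: an at-most-3-valued map whose value
is `{0, 1/2}` off the arc `[1/3, 2/3]`, and `{0, 1/2, (3/2)(t − 1/3)}` at the
point `t ∈ [1/3, 2/3]` (all taken mod 1). -/
def forkMap : UnitAddCircle → Set UnitAddCircle := fun x =>
  {((0 : ℝ) : UnitAddCircle), ((1/2 : ℝ) : UnitAddCircle)} ∪
    {y | ∃ t : ℝ, t ∈ Set.Icc (1/3 : ℝ) (2/3) ∧ x = ((t : ℝ) : UnitAddCircle) ∧
      y = ((3/2 * (t - 1/3) : ℝ) : UnitAddCircle)}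

/-!
If `w` were such a weight function, its weight sums over an open set `U` would be locally
constant, hence constant along any arc of base points whose values avoid `∂U`. Along the arc
`[1/2, 1]` all values stay at distance `0` or `≥ 1/4` from `0`, and along `[0, 1/2]` at distance
`0` or `≥ 1/4` from `1/2`; summing over balls of radius `1/5` gives `w(1/2, 0) = w(0, 0)` and
`w(0, 1/2) = w(1/2, 1/2)`. The total weight is constant on the whole circle, so
`w(0, 0) + w(0, 1/2) = w(1/2, 0) + w(1/2, 1/2) + w(1/2, 1/4)`, which forces the weight
`w(1/2, 1/4)` of the third branch to vanish.
-/

open Metric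

namespace AddCircle

variable {p : ℝ}

theorem coe_eq_coe_iff_of_abs_sub_lt [Fact (0 < p)] {x y : ℝ} (h : |x - y| < p) :
    (x : AddCircle p) = y ↔ x = y := by
  have hx : x ∈ Ico (min x y) (min x y + p) := by
    constructor <;> cases min_choice x y <;> grind [abs_sub_lt_iff]
  have hy : y ∈ Ico (min x y) (min x y + p) := by
    constructor <;> cases min_choice x y <;> grind [abs_sub_lt_iff]
  exact coe_eq_coe_iff_of_mem_Ico hx hy

theorem dist_coe_coe_of_abs_sub_le (hp : p ≠ 0) {x y : ℝ} (h : |x - y| ≤ |p| / 2) :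
    dist (x : AddCircle p) y = |x - y| := by
  rw [dist_eq_norm, ← coe_sub, norm_coe_eq_abs_iff p hp]
  exact h

end AddCircle

namespace Metric

variable {E : Type*} [PseudoMetricSpace E] {S : Set E} {c : E} {r R : ℝ}

theorem inter_frontier_ball_eq_empty (hr : 0 < r) (hrR : r < R)
    (h : ∀ y ∈ S, y = c ∨ R ≤ dist y c) : S ∩ frontier (ball c r) = ∅ := by
  refine eq_empty_of_forall_notMem fun y ⟨hyS, hyr⟩ => ?_
  have hdist : dist y c = r := frontier_ball_subset_sphere hyr
  rcases h y hyS with rfl | hR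
  · rw [dist_self] at hdist
    exact hr.ne hdist
  · linarith

theorem ball_inter_eq_singleton (hc : c ∈ S) (hr : 0 < r) (hrR : r ≤ R)
    (h : ∀ y ∈ S, y = c ∨ R ≤ dist y c) : ball c r ∩ S = {c} := by
  refine eq_singleton_iff_unique_mem.2 ⟨⟨mem_ball_self hr, hc⟩, fun y ⟨hyr, hyS⟩ => ?_⟩
  rcases h y hyS with rfl | hR
  · rfl
  · exact absurd (mem_ball.1 hyr) (by linarith)

end Metric

theorem finsum_mem_eq_of_inter_support_eq {α M : Type*} [AddCommMonoid M] {f : α → M}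
    {U F : Set α} (h : U ∩ Function.support f = F) : ∑ᶠ y ∈ U, f y = ∑ᶠ y ∈ F, f y := by
  rw [← finsum_mem_inter_support, h]

section WeightSums

variable {X Y : Type*} [TopologicalSpace X] [TopologicalSpace Y]

/-- The local weight-sum condition in the definition of an `ℕ`-weighted map `(n, w)`. -/
def HasLocallyConstantWeightSums (n : X → Set Y) (w : X → Y → ℕ) : Prop :=
  ∀ U : Set Y, IsOpen U → ∀ x : X, n x ∩ frontier U = ∅ →
    ∃ V : Set X, IsOpen V ∧ x ∈ V ∧ ∀ z ∈ V, ∑ᶠ y ∈ U, w x y = ∑ᶠ y ∈ U, w z y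

theorem HasLocallyConstantWeightSums.finsum_mem_eq_of_isPreconnected {n : X → Set Y}
    {w : X → Y → ℕ} (hw : HasLocallyConstantWeightSums n w) {U : Set Y} (hU : IsOpen U)
    {A : Set X} (hA : IsPreconnected A) (hAU : ∀ x ∈ A, n x ∩ frontier U = ∅) {a b : X}
    (ha : a ∈ A) (hb : b ∈ A) : ∑ᶠ y ∈ U, w a y = ∑ᶠ y ∈ U, w b y := by
  refine hA.constant (f := fun x => ∑ᶠ y ∈ U, w x y) (fun x hx => ?_) ha hb
  obtain ⟨V, hV, hxV, hconst⟩ := hw U hU x (hAU x hx)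
  exact (continuousAt_const.congr
    (Filter.eventually_of_mem (hV.mem_nhds hxV) hconst)).continuousWithinAt

end WeightSums

theorem mem_forkMap_coe {t : ℝ} (ht : t ∈ Icc 0 1) {y : UnitAddCircle} :
    y ∈ forkMap t ↔ y = ((0 : ℝ) : UnitAddCircle) ∨ y = ((1/2 : ℝ) : UnitAddCircle) ∨
      t ∈ Icc (1/3 : ℝ) (2/3) ∧ y = ((3/2 * (t - 1/3) : ℝ) : UnitAddCircle) := by
  have hcoe : ∀ s ∈ Icc (1/3 : ℝ) (2/3), (t : UnitAddCircle) = s ↔ t = s := fun s hs =>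
    AddCircle.coe_eq_coe_iff_of_abs_sub_lt (by grind [abs_sub_lt_iff])
  simp only [forkMap, mem_union, mem_insert_iff, mem_singleton_iff, mem_ofPred_eq, or_assoc]
  refine or_congr_right (or_congr_right ⟨?_, ?_⟩)
  · rintro ⟨s, hs, hts, rfl⟩
    obtain rfl := (hcoe s hs).1 hts
    exact ⟨hs, rfl⟩
  · rintro ⟨ht, rfl⟩
    exact ⟨t, ht, rfl, rfl⟩

theorem forkMap_coe_zero : forkMap ((0 : ℝ) : UnitAddCircle) =
    {((0 : ℝ) : UnitAddCircle), ((1/2 : ℝ) : UnitAddCircle)} := by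
  ext y
  rw [mem_forkMap_coe (by norm_num)]
  norm_num

theorem forkMap_coe_half : forkMap ((1/2 : ℝ) : UnitAddCircle) =
    {((0 : ℝ) : UnitAddCircle), ((1/2 : ℝ) : UnitAddCircle), ((1/4 : ℝ) : UnitAddCircle)} := by
  ext y
  rw [mem_forkMap_coe (by norm_num)]
  norm_num

theorem eq_zero_or_quarter_le_dist_zero_of_mem_forkMap {x y : UnitAddCircle}
    (hx : x ∈ ((↑) : ℝ → UnitAddCircle) '' Icc (1/2) 1) (hy : y ∈ forkMap x) :
    y = ((0 : ℝ) : UnitAddCircle) ∨ 1/4 ≤ dist y ((0 : ℝ) : UnitAddCircle) := by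
  obtain ⟨t, ⟨ht₁, ht₂⟩, rfl⟩ := hx
  rw [mem_forkMap_coe ⟨by linarith, ht₂⟩] at hy
  rcases hy with rfl | rfl | ⟨⟨hs₁, hs₂⟩, rfl⟩
  · exact .inl rfl
  · right
    rw [AddCircle.dist_coe_coe_of_abs_sub_le one_ne_zero (by norm_num)]
    norm_num
  · right
    rw [AddCircle.dist_coe_coe_of_abs_sub_le one_ne_zero
      (by rw [abs_le]; constructor <;> linarith)]
    exact le_abs.2 (.inl (by linarith))

theorem eq_half_or_quarter_le_dist_half_of_mem_forkMap {x y : UnitAddCircle}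
    (hx : x ∈ ((↑) : ℝ → UnitAddCircle) '' Icc 0 (1/2)) (hy : y ∈ forkMap x) :
    y = ((1/2 : ℝ) : UnitAddCircle) ∨ 1/4 ≤ dist y ((1/2 : ℝ) : UnitAddCircle) := by
  obtain ⟨t, ⟨ht₁, ht₂⟩, rfl⟩ := hx
  rw [mem_forkMap_coe ⟨ht₁, by linarith⟩] at hy
  rcases hy with rfl | rfl | ⟨⟨hs₁, hs₂⟩, rfl⟩
  · right
    rw [AddCircle.dist_coe_coe_of_abs_sub_le one_ne_zero (by norm_num)]
    norm_num
  · exact .inl rfl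
  · right
    rw [AddCircle.dist_coe_coe_of_abs_sub_le one_ne_zero
      (by rw [abs_le]; constructor <;> linarith)]
    exact le_abs.2 (.inr (by linarith))

theorem forkMap_inter_frontier_ball_zero {x : UnitAddCircle}
    (hx : x ∈ ((↑) : ℝ → UnitAddCircle) '' Icc (1/2) 1) :
    forkMap x ∩ frontier (ball ((0 : ℝ) : UnitAddCircle) (1/5)) = ∅ :=
  inter_frontier_ball_eq_empty (R := 1/4) (by norm_num) (by norm_num) fun _ =>
    eq_zero_or_quarter_le_dist_zero_of_mem_forkMap hx

theorem ball_zero_inter_forkMap {x : UnitAddCircle}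
    (hx : x ∈ ((↑) : ℝ → UnitAddCircle) '' Icc (1/2) 1) :
    ball ((0 : ℝ) : UnitAddCircle) (1/5) ∩ forkMap x = {((0 : ℝ) : UnitAddCircle)} :=
  ball_inter_eq_singleton (R := 1/4) (.inl (.inl rfl)) (by norm_num) (by norm_num) fun _ =>
    eq_zero_or_quarter_le_dist_zero_of_mem_forkMap hx

theorem forkMap_inter_frontier_ball_half {x : UnitAddCircle}
    (hx : x ∈ ((↑) : ℝ → UnitAddCircle) '' Icc 0 (1/2)) :
    forkMap x ∩ frontier (ball ((1/2 : ℝ) : UnitAddCircle) (1/5)) = ∅ :=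
  inter_frontier_ball_eq_empty (R := 1/4) (by norm_num) (by norm_num) fun _ =>
    eq_half_or_quarter_le_dist_half_of_mem_forkMap hx

theorem ball_half_inter_forkMap {x : UnitAddCircle}
    (hx : x ∈ ((↑) : ℝ → UnitAddCircle) '' Icc 0 (1/2)) :
    ball ((1/2 : ℝ) : UnitAddCircle) (1/5) ∩ forkMap x = {((1/2 : ℝ) : UnitAddCircle)} :=
  ball_inter_eq_singleton (R := 1/4) (.inl (.inr rfl)) (by norm_num) (by norm_num) fun _ =>
    eq_half_or_quarter_le_dist_half_of_mem_forkMap hx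

section ForkWeights

variable {w : UnitAddCircle → UnitAddCircle → ℕ}
  (hsupp : ∀ x, Function.support (w x) = forkMap x) (hw : HasLocallyConstantWeightSums forkMap w)
include hsupp hw

theorem forkWeight_half_zero_eq :
    w ((1/2 : ℝ) : UnitAddCircle) ((0 : ℝ) : UnitAddCircle) =
      w ((0 : ℝ) : UnitAddCircle) ((0 : ℝ) : UnitAddCircle) := by
  have ho : ((0 : ℝ) : UnitAddCircle) ∈ ((↑) : ℝ → UnitAddCircle) '' Icc (1/2) 1 :=
    ⟨1, by norm_num, by simp⟩
  have hh : ((1/2 : ℝ) : UnitAddCircle) ∈ ((↑) : ℝ → UnitAddCircle) '' Icc (1/2) 1 :=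
    mem_image_of_mem _ (by norm_num)
  have h := hw.finsum_mem_eq_of_isPreconnected isOpen_ball
    (isPreconnected_Icc.image _ (AddCircle.continuous_mk' 1).continuousOn)
    (fun _ => forkMap_inter_frontier_ball_zero) hh ho
  rwa [finsum_mem_eq_of_inter_support_eq (by rw [hsupp, ball_zero_inter_forkMap hh]),
    finsum_mem_singleton, finsum_mem_eq_of_inter_support_eq
      (by rw [hsupp, ball_zero_inter_forkMap ho]), finsum_mem_singleton] at h

theorem forkWeight_zero_half_eq :
    w ((0 : ℝ) : UnitAddCircle) ((1/2 : ℝ) : UnitAddCircle) =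
      w ((1/2 : ℝ) : UnitAddCircle) ((1/2 : ℝ) : UnitAddCircle) := by
  have ho : ((0 : ℝ) : UnitAddCircle) ∈ ((↑) : ℝ → UnitAddCircle) '' Icc 0 (1/2) :=
    mem_image_of_mem _ (by norm_num)
  have hh : ((1/2 : ℝ) : UnitAddCircle) ∈ ((↑) : ℝ → UnitAddCircle) '' Icc 0 (1/2) :=
    mem_image_of_mem _ (by norm_num)
  have h := hw.finsum_mem_eq_of_isPreconnected isOpen_ball
    (isPreconnected_Icc.image _ (AddCircle.continuous_mk' 1).continuousOn)
    (fun _ => forkMap_inter_frontier_ball_half) ho hh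
  rwa [finsum_mem_eq_of_inter_support_eq (by rw [hsupp, ball_half_inter_forkMap ho]),
    finsum_mem_singleton, finsum_mem_eq_of_inter_support_eq
      (by rw [hsupp, ball_half_inter_forkMap hh]), finsum_mem_singleton] at h

theorem forkWeight_total_zero_eq_total_half :
    w ((0 : ℝ) : UnitAddCircle) ((0 : ℝ) : UnitAddCircle) +
        w ((0 : ℝ) : UnitAddCircle) ((1/2 : ℝ) : UnitAddCircle) =
      w ((1/2 : ℝ) : UnitAddCircle) ((0 : ℝ) : UnitAddCircle) +
        (w ((1/2 : ℝ) : UnitAddCircle) ((1/2 : ℝ) : UnitAddCircle) +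
          w ((1/2 : ℝ) : UnitAddCircle) ((1/4 : ℝ) : UnitAddCircle)) := by
  have hne {x y : ℝ} (h : |x - y| < 1) (hxy : x ≠ y) : (x : UnitAddCircle) ≠ y :=
    (AddCircle.coe_eq_coe_iff_of_abs_sub_lt h).not.2 hxy
  have hoh := hne (x := 0) (y := 1/2) (by norm_num) (by norm_num)
  have hoq := hne (x := 0) (y := 1/4) (by norm_num) (by norm_num)
  have hhq := hne (x := 1/2) (y := 1/4) (by norm_num) (by norm_num)
  have h := hw.finsum_mem_eq_of_isPreconnected isOpen_univ isPreconnected_univ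
    (fun _ _ => by rw [frontier_univ, inter_empty]) (mem_univ ((0 : ℝ) : UnitAddCircle))
    (mem_univ ((1/2 : ℝ) : UnitAddCircle))
  rwa [finsum_mem_eq_of_inter_support_eq (by rw [hsupp, univ_inter, forkMap_coe_zero]),
    finsum_mem_pair hoh, finsum_mem_eq_of_inter_support_eq
      (by rw [hsupp, univ_inter, forkMap_coe_half]),
    finsum_mem_insert _ (by rintro (e | e) <;> contradiction) (toFinite _),
    finsum_mem_pair hhq] at h

end ForkWeights

/-- Theorem: there is no weight function `w : S¹ × S¹ → ℕ` making the fork map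
into an `ℕ`-weighted map, i.e. no `w` which is strictly positive exactly on the
graph of the fork map and satisfies the local weight-sum condition: for every
open `U ⊆ S¹` and every `x` with `forkMap x ∩ ∂U = ∅` there is a neighborhood
`V` of `x` on which the sums `Σ_{y∈U} w(·,y)` agree with the sum at `x`.
Hence the class of at-most-`n`-valued maps realized by `ℕ`-weighted maps is
strictly smaller than the class of all at-most-`n`-valued maps. -/
theorem forkMap_not_weighted :
    ¬ ∃ w : UnitAddCircle → UnitAddCircle → ℕ,
      (∀ x y, 0 < w x y ↔ y ∈ forkMap x) ∧
      (∀ U : Set UnitAddCircle, IsOpen U → ∀ x : UnitAddCircle,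
        forkMap x ∩ frontier U = ∅ →
          ∃ V : Set UnitAddCircle, IsOpen V ∧ x ∈ V ∧
            ∀ z ∈ V, ∑ᶠ y ∈ U, w x y = ∑ᶠ y ∈ U, w z y) := by
  rintro ⟨w, hpos, hloc⟩
  have hsupp (x : UnitAddCircle) : Function.support (w x) = forkMap x := by
    ext y
    rw [Function.mem_support, ← hpos, Nat.pos_iff_ne_zero]
  have hthird : 0 < w ((1/2 : ℝ) : UnitAddCircle) ((1/4 : ℝ) : UnitAddCircle) :=
    (hpos _ _).2 (by rw [forkMap_coe_half]; exact .inr (.inr rfl))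
  have total := forkWeight_total_zero_eq_total_half hsupp hloc
  rw [forkWeight_half_zero_eq hsupp hloc, forkWeight_zero_half_eq hsupp hloc] at total
  omega
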